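/- Let L be an n×n real symmetric matrix with L·1ₙ = 0, and suppose there is an orthogonal matrix Q with QᵀLQ = diag(0, λ₂, …, λₙ) where λ₂, …, λₙ are distinct and strictly positive. Let i ≠ j ∈ {1, …, n} be such that [Q]_{i,m} − [Q]_{j,m} ≠ 0 for every m ∈ {2, …, n}. If x ∈ ℝⁿ satisfies (e_i − e_j)ᵀ·L^m·x = 0 for every integer m ≥ 1, then x ∈ span{1ₙ}, i.e., all coordinates of x are equal. -/

import Mathlib

/-! With `y = Qᵀ x`, the observations at `i` and `j` read `∑ₖ (Q i k - Q j k) yₖ λₖ ^ m = 0` for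
all `m ≥ 1`: a Vandermonde system in the distinct eigenvalues, so `yₖ = 0` whenever `λₖ ≠ 0`,
i.e. `x` is a multiple of the first column of `Q`. Since `L 1 = 0`, so is `1`, and `x` is
constant. -/

open Matrix Function

theorem Function.injective_of_eq_zero_of_pos {ι : Type*} {f : ι → ℝ} {i₀ : ι} (h₀ : f i₀ = 0)
    (hpos : ∀ i, i ≠ i₀ → 0 < f i) (hne : ∀ i j, i ≠ i₀ → j ≠ i₀ → i ≠ j → f i ≠ f j) :
    Injective f := by
  intro a b hab
  by_contra hab'
  rcases eq_or_ne a i₀ with rfl | ha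
  · exact (hpos b (Ne.symm hab')).ne' (hab.symm.trans h₀)
  rcases eq_or_ne b i₀ with rfl | hb
  · exact (hpos a ha).ne' (hab.trans h₀)
  exact hne a b ha hb hab' hab

namespace Matrix

variable {n : ℕ} {R : Type*} [CommRing R]

theorem eq_zero_of_forall_sum_mul_pow_eq_zero [IsDomain R] {v c : Fin n → R}
    (hv : Injective v) (h : ∀ m < n, ∑ k, c k * v k ^ m = 0) : c = 0 :=
  eq_zero_of_vecMul_eq_zero (det_vandermonde_ne_zero_iff.mpr hv) <|
    funext fun m => h m m.isLt

theorem mulVec_apply_sub_mulVec_apply {m : Type*} (M : Matrix m (Fin n) R) (v : Fin n → R)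
    (i j : m) : (M *ᵥ v) i - (M *ᵥ v) j = ∑ k, (M i k - M j k) * v k := by
  simp only [mulVec, dotProduct, ← Finset.sum_sub_distrib, sub_mul]

theorem eq_smul_col_of_transpose_mulVec_apply_eq_zero {Q : Matrix (Fin n) (Fin n) R}
    (hQ : Qᵀ * Q = 1) {v : Fin n → R} {j : Fin n} (hv : ∀ k, k ≠ j → (Qᵀ *ᵥ v) k = 0) :
    v = (Qᵀ *ᵥ v) j • Q.col j := by
  have hsingle : Qᵀ *ᵥ v = Pi.single j ((Qᵀ *ᵥ v) j) := by
    ext k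
    rcases eq_or_ne k j with rfl | hk
    · simp
    · simp [hv k hk, hk]
  calc v = Q *ᵥ (Qᵀ *ᵥ v) := by rw [mulVec_mulVec, mul_eq_one_comm.mp hQ, one_mulVec]
    _ = (Qᵀ *ᵥ v) j • Q.col j := by
      rw [hsingle, mulVec_single, Pi.single_eq_same, op_smul_eq_smul]

section Diagonalization

variable {L Q : Matrix (Fin n) (Fin n) R} {lam : Fin n → R}
  (hQ : Qᵀ * Q = 1) (hdiag : Qᵀ * L * Q = diagonal lam)
include hQ hdiag

theorem pow_eq_mul_diagonal_pow_mul_transpose (m : ℕ) :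
    L ^ m = Q * diagonal (lam ^ m) * Qᵀ := by
  have hQQ : Q * Qᵀ = 1 := mul_eq_one_comm.mp hQ
  have hLQ : SemiconjBy Q (diagonal lam) L := by
    rw [SemiconjBy, ← hdiag, ← Matrix.mul_assoc, ← Matrix.mul_assoc, hQQ, Matrix.one_mul]
  rw [← diagonal_pow, (hLQ.pow_right m).eq, Matrix.mul_assoc, hQQ, Matrix.mul_one]

theorem pow_mulVec_eq (m : ℕ) (x : Fin n → R) : L ^ m *ᵥ x = Q *ᵥ (lam ^ m * Qᵀ *ᵥ x) := by
  rw [pow_eq_mul_diagonal_pow_mul_transpose hQ hdiag, ← mulVec_mulVec, ← mulVec_mulVec]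
  congr 1
  ext k
  exact mulVec_diagonal _ _ k

theorem transpose_mulVec_apply_eq_zero_of_mulVec_eq_zero [NoZeroDivisors R] {v : Fin n → R}
    (hv : L *ᵥ v = 0) {k : Fin n} (hk : lam k ≠ 0) : (Qᵀ *ᵥ v) k = 0 := by
  have hdiag_v : diagonal lam *ᵥ (Qᵀ *ᵥ v) = Qᵀ *ᵥ (L *ᵥ v) := by
    rw [mulVec_mulVec, mulVec_mulVec, ← hdiag, Matrix.mul_assoc _ Q, mul_eq_one_comm.mp hQ,
      Matrix.mul_one]
  have := congrFun hdiag_v k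
  rw [mulVec_diagonal, hv, mulVec_zero, Pi.zero_apply] at this
  exact (mul_eq_zero.mp this).resolve_left hk

theorem transpose_mulVec_apply_eq_zero_of_forall_pow_mulVec_apply_sub_eq_zero [IsDomain R]
    (hlam : Injective lam) {i j : Fin n} {x : Fin n → R}
    (hx : ∀ m, 1 ≤ m → (L ^ m *ᵥ x) i - (L ^ m *ᵥ x) j = 0) {k : Fin n} (hk : lam k ≠ 0)
    (hQk : Q i k - Q j k ≠ 0) : (Qᵀ *ᵥ x) k = 0 := by
  set y := Qᵀ *ᵥ x with hy
  have hmoments : ∀ m < n, ∑ k, (Q i k - Q j k) * y k * lam k * lam k ^ m = 0 := by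
    intro m _
    rw [← hx (m + 1) le_add_self, pow_mulVec_eq hQ hdiag, ← hy, mulVec_apply_sub_mulVec_apply]
    exact Finset.sum_congr rfl fun k _ => by simp only [Pi.mul_apply, Pi.pow_apply]; ring
  have := congrFun (eq_zero_of_forall_sum_mul_pow_eq_zero hlam hmoments) k
  simpa [hQk, hk] using this

end Diagonalization

end Matrix

theorem stmt_10_general {n : ℕ} [NeZero n]
    (L Q : Matrix (Fin n) (Fin n) ℝ)
    (hL1 : L.mulVec (fun _ => (1:ℝ)) = 0)
    (hQ : Qᵀ * Q = 1)
    (lam : Fin n → ℝ) (hlam0 : lam 0 = 0)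
    (hlampos : ∀ i : Fin n, i ≠ 0 → 0 < lam i)
    (hlamdist : ∀ i j : Fin n, i ≠ 0 → j ≠ 0 → i ≠ j → lam i ≠ lam j)
    (hdiag : Qᵀ * L * Q = Matrix.diagonal lam)
    (i j : Fin n)
    (hQij : ∀ m : Fin n, m ≠ 0 → Q i m - Q j m ≠ 0)
    (x : Fin n → ℝ)
    (hx : ∀ m : ℕ, 1 ≤ m → ((L ^ m).mulVec x) i - ((L ^ m).mulVec x) j = 0) :
    ∃ a : ℝ, x = fun _ => a := by
  have hlam : Injective lam := injective_of_eq_zero_of_pos hlam0 hlampos hlamdist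
  have hx_col : x = (Qᵀ *ᵥ x) 0 • Q.col 0 :=
    eq_smul_col_of_transpose_mulVec_apply_eq_zero hQ fun k hk =>
      transpose_mulVec_apply_eq_zero_of_forall_pow_mulVec_apply_sub_eq_zero hQ hdiag hlam hx
        (hlampos k hk).ne' (hQij k hk)
  have h1_col : (fun _ => 1) = (Qᵀ *ᵥ fun _ => 1) 0 • Q.col 0 :=
    eq_smul_col_of_transpose_mulVec_apply_eq_zero hQ fun k hk =>
      transpose_mulVec_apply_eq_zero_of_mulVec_eq_zero hQ hdiag hL1 (hlampos k hk).ne'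
  set a := (Qᵀ *ᵥ x) 0
  set b := (Qᵀ *ᵥ fun _ => (1 : ℝ)) 0
  refine ⟨a / b, funext fun s => ?_⟩
  have hxs : x s = a * Q s 0 := congrFun hx_col s
  have h1s : 1 = b * Q s 0 := congrFun h1_col s
  have hb : b ≠ 0 := left_ne_zero_of_mul (h1s.symm ▸ one_ne_zero)
  rw [hxs, eq_div_iff hb]
  linear_combination -a * h1s

/-- Key lemma of Appendix F (eqs. (76)–(80)): if `(e_i − e_j)ᵀ L^m x = 0` for all `m ≥ 1`,
where rows `i` and `j` of the eigenvector matrix `Q` differ in every column `2, …, n` and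
`L` has simple zero eigenvalue and distinct positive remaining eigenvalues, then `x` is a
consensus vector. -/
theorem stmt_10 {n : ℕ} [NeZero n]
    (L Q : Matrix (Fin n) (Fin n) ℝ) (hLsymm : L.IsSymm)
    (hL1 : L.mulVec (fun _ => (1:ℝ)) = 0)
    (hQ : Qᵀ * Q = 1)
    (lam : Fin n → ℝ) (hlam0 : lam 0 = 0)
    (hlampos : ∀ i : Fin n, i ≠ 0 → 0 < lam i)
    (hlamdist : ∀ i j : Fin n, i ≠ 0 → j ≠ 0 → i ≠ j → lam i ≠ lam j)
    (hdiag : Qᵀ * L * Q = Matrix.diagonal lam)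
    (i j : Fin n) (hij : i ≠ j)
    (hQij : ∀ m : Fin n, m ≠ 0 → Q i m - Q j m ≠ 0)
    (x : Fin n → ℝ)
    (hx : ∀ m : ℕ, 1 ≤ m → ((L ^ m).mulVec x) i - ((L ^ m).mulVec x) j = 0) :
    ∃ a : ℝ, x = fun _ => a :=
  stmt_10_general L Q hL1 hQ lam hlam0 hlampos hlamdist hdiag i j hQij x hx
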